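/- arXiv:1211.3958 — 5 statements merged into one kernel-verified Lean document; each statement's English description precedes it below -/
import Mathlib

section
/- For all θ with 0 < |θ| ≤ π/3, log²(2(1 - cos θ)) ≤ log²(θ²/2). -/
/-!
On `0 < |θ| ≤ π/3` we have `0 < θ²/2 ≤ 2(1 - cos θ) ≤ 1`: the lower bound because
`2(1 - cos θ) = 4 sin²(θ/2)` and `sin(θ/2) ≥ θ/2 - (θ/2)³/6`, the upper one because
`cos θ ≥ cos(π/3) = 1/2`. Since `log²` is antitone on `(0, 1]`, the inequality follows.
-/

open Real

lemma Real.sq_div_two_le_two_mul_one_sub_cos {x : ℝ} (hx : |x| ≤ 2) :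
    x ^ 2 / 2 ≤ 2 * (1 - cos x) := by
  wlog hx₀ : 0 ≤ x
  case inr => simpa using this (by rwa [abs_neg]) (neg_nonneg.2 (le_of_not_ge hx₀))
  rw [abs_of_nonneg hx₀] at hx
  have hsin : 5 / 12 * x ≤ sin (x / 2) := by
    have hcube := sin_ge_sub_cube (x := x / 2) (by positivity)
    nlinarith [mul_nonneg (mul_nonneg hx₀ (sub_nonneg.2 hx)) (by linarith : (0 : ℝ) ≤ 2 + x)]
  have hsq := (pow_le_pow_left₀ (by positivity) hsin 2).trans_eq (sin_sq_eq_half_sub _)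
  ring_nf at hsq ⊢
  nlinarith

lemma Real.two_mul_one_sub_cos_le_one {x : ℝ} (hx : |x| ≤ π / 3) : 2 * (1 - cos x) ≤ 1 := by
  have : cos (π / 3) ≤ cos |x| :=
    cos_le_cos_of_nonneg_of_le_pi (abs_nonneg x) (by linarith [pi_pos]) hx
  rw [cos_pi_div_three, cos_abs] at this
  linarith

lemma Real.sq_log_le_sq_log_of_le_of_le_one {a b : ℝ} (ha : 0 < a) (hab : a ≤ b) (hb : b ≤ 1) :
    log b ^ 2 ≤ log a ^ 2 := by
  have hlog : log a ≤ log b := log_le_log ha hab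
  have hb₀ : log b ≤ 0 := log_nonpos (ha.le.trans hab) hb
  nlinarith

theorem sq_log_two_mul_one_sub_cos_le (θ : ℝ) (h0 : 0 < |θ|) (h1 : |θ| ≤ π/3) :
    (Real.log (2*(1 - Real.cos θ)))^2 ≤ (Real.log (θ^2/2))^2 := by
  have hpos : 0 < θ ^ 2 / 2 := by
    have : 0 < θ ^ 2 := by rw [← sq_abs]; positivity
    positivity
  refine sq_log_le_sq_log_of_le_of_le_one hpos ?_ (two_mul_one_sub_cos_le_one h1)
  exact sq_div_two_le_two_mul_one_sub_cos (h1.trans (by linarith [pi_lt_d2]))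
end

section
/- For U uniform on [0,1], Y = log(2(1 - cos(2πU))), and every c > 0, P(Y ≤ -c) ≤ (2/π) e^{-c/4}. -/
open Real MeasureTheory

theorem prob_log_two_mul_one_sub_cos_le_neg (c : ℝ) (hc : 0 < c) :
    (volume.restrict (Set.Icc (0:ℝ) 1))
        {u : ℝ | Real.log (2*(1 - Real.cos (2*π*u))) ≤ -c}
      ≤ ENNReal.ofReal ((2/π) * Real.exp (-c/4)) := by
  set δ : ℝ := Real.exp (-c/2) / 4 with hδ
  have hδpos : 0 < δ := by positivity
  have hsub : {u : ℝ | Real.log (2*(1 - Real.cos (2*π*u))) ≤ -c} ∩ Set.Icc (0:ℝ) 1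
      ⊆ Set.Icc 0 δ ∪ Set.Icc (1-δ) 1 := by
    rintro u ⟨hu, hu0, hu1⟩
    simp only [Set.mem_setOf_eq] at hu
    have hx0 : 0 ≤ 2*(1 - Real.cos (2*π*u)) := by
      nlinarith [Real.cos_le_one (2*π*u)]
    have hxpos : 0 < 2*(1 - Real.cos (2*π*u)) := by
      rcases hx0.lt_or_eq with h | h
      · exact h
      · exfalso; rw [← h, Real.log_zero] at hu; linarith
    have hxe : 2*(1 - Real.cos (2*π*u)) ≤ Real.exp (-c) :=
      (Real.log_le_iff_le_exp hxpos).mp hu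
    have hcos : Real.cos (2*π*u) = 1 - 2 * Real.sin (π*u) ^ 2 := by
      rw [show 2*π*u = 2*(π*u) by ring, Real.cos_two_mul]
      nlinarith [Real.sin_sq_add_cos_sq (π*u)]
    have hs0 : 0 ≤ Real.sin (π*u) := by
      apply Real.sin_nonneg_of_nonneg_of_le_pi
      · positivity
      · nlinarith [Real.pi_pos]
    have hs2 : Real.sin (π*u) ^ 2 ≤ (Real.exp (-c/2) / 2) ^ 2 := by
      have he : Real.exp (-c) = (Real.exp (-c/2))^2 := by
        rw [sq, ← Real.exp_add]; norm_num
      rw [hcos] at hxe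
      nlinarith [Real.exp_pos (-c/2)]
    have hs : Real.sin (π*u) ≤ Real.exp (-c/2) / 2 := by
      nlinarith [Real.exp_pos (-c/2)]
    rcases le_or_gt u (1/2) with h | h
    · left
      have hj : 2/π * (π*u) ≤ Real.sin (π*u) := by
        apply Real.mul_le_sin (by positivity)
        nlinarith [Real.pi_pos]
      have : 2/π * (π*u) = 2*u := by field_simp
      rw [this] at hj
      constructor
      · exact hu0
      · rw [hδ]; linarith
    · right
      have hsin : Real.sin (π*u) = Real.sin (π*(1-u)) := by
        rw [show π*(1-u) = π - π*u by ring, Real.sin_pi_sub]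
      have hj : 2/π * (π*(1-u)) ≤ Real.sin (π*(1-u)) := by
        apply Real.mul_le_sin
        · nlinarith [Real.pi_pos]
        · nlinarith [Real.pi_pos]
      have heq : 2/π * (π*(1-u)) = 2*(1-u) := by field_simp
      rw [heq, ← hsin] at hj
      constructor
      · rw [hδ]; linarith
      · exact hu1
  calc (volume.restrict (Set.Icc (0:ℝ) 1))
        {u : ℝ | Real.log (2*(1 - Real.cos (2*π*u))) ≤ -c}
      ≤ volume (Set.Icc (0:ℝ) δ ∪ Set.Icc (1-δ) 1) := by
        rw [Measure.restrict_apply' measurableSet_Icc]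
        exact measure_mono hsub
    _ ≤ volume (Set.Icc (0:ℝ) δ) + volume (Set.Icc (1-δ) 1) := measure_union_le _ _
    _ = ENNReal.ofReal δ + ENNReal.ofReal δ := by
        rw [Real.volume_Icc, Real.volume_Icc]
        norm_num
    _ = ENNReal.ofReal (2*δ) := by
        rw [← ENNReal.ofReal_add hδpos.le hδpos.le]; ring_nf
    _ ≤ ENNReal.ofReal ((2/π) * Real.exp (-c/4)) := by
        apply ENNReal.ofReal_le_ofReal
        have h1 : Real.exp (-c/2) ≤ Real.exp (-c/4) := Real.exp_le_exp.mpr (by linarith)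
        have h2 : (π:ℝ) ≤ 4 := by nlinarith [Real.pi_le_four]
        have h3 : 0 < Real.exp (-c/4) := Real.exp_pos _
        rw [hδ]
        rw [div_mul_eq_mul_div, le_div_iff₀ Real.pi_pos]
        nlinarith
end

section
/- Let (n_k) be a sequence of positive integers with n_k = k^p for some fixed real p ≥ 0, and set s_N² = Σ_{k=1}^N n_k². Then for every ε > 0, Σ_{k=1}^N exp(-ε s_N / n_k) → 0 as N → ∞. -/
open Real Filter

/-!
Since `k ^ p ≤ N ^ p`, every term is at most `exp (-ε s_N / N ^ p)`, and comparing `s_N ^ 2` with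
`∫₀ᴺ x ^ (2p) dx` gives `s_N ≥ N ^ p √(N / (2p + 1))`. So the sum is at most `N exp (-c √N)` with
`c = ε / √(2p + 1)`, which tends to `0`.
-/

theorem integral_le_sum_Icc_of_monotoneOn {f : ℝ → ℝ} {N : ℕ} (hf : MonotoneOn f (Set.Icc 0 N)) :
    ∫ x in (0:ℝ)..N, f x ≤ ∑ j ∈ Finset.Icc 1 N, f j := by
  have h := MonotoneOn.integral_le_sum (x₀ := 0) (a := N) (by rwa [zero_add])
  simp only [zero_add] at h
  rwa [Finset.range_eq_Ico, Finset.sum_Ico_add' (fun j : ℕ => f j), zero_add,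
    Finset.Ico_add_one_right_eq_Icc] at h

theorem rpow_add_one_div_le_sum_Icc_rpow {q : ℝ} (hq : 0 ≤ q) (N : ℕ) :
    (N : ℝ) ^ (q + 1) / (q + 1) ≤ ∑ j ∈ Finset.Icc 1 N, (j : ℝ) ^ q := by
  have hmono : MonotoneOn (fun x : ℝ => x ^ q) (Set.Icc 0 N) :=
    fun x hx y _ hxy => rpow_le_rpow hx.1 hxy hq
  calc (N : ℝ) ^ (q + 1) / (q + 1) = ∫ x in (0:ℝ)..N, x ^ q := by
        rw [integral_rpow (Or.inl (by linarith)), zero_rpow (by linarith), sub_zero]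
    _ ≤ _ := integral_le_sum_Icc_of_monotoneOn hmono

theorem rpow_mul_sqrt_div_le_sqrt_sum_sq_rpow {p : ℝ} (hp : 0 ≤ p) (N : ℕ) :
    (N : ℝ) ^ p * √(N / (2 * p + 1)) ≤ √(∑ j ∈ Finset.Icc 1 N, ((j : ℝ) ^ p) ^ 2) := by
  have hN : (0 : ℝ) ≤ N := N.cast_nonneg
  have hsq : ∀ x : ℝ, 0 ≤ x → (x ^ p) ^ 2 = x ^ (2 * p) := fun x hx => by
    rw [← rpow_mul_natCast hx, mul_comm]; norm_num
  refine le_sqrt_of_sq_le ?_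
  rw [mul_pow, sq_sqrt (by positivity),
    Finset.sum_congr rfl fun j _ => hsq _ (Nat.cast_nonneg j), hsq N hN]
  calc (N : ℝ) ^ (2 * p) * (N / (2 * p + 1)) = (N : ℝ) ^ (2 * p + 1) / (2 * p + 1) := by
        rw [rpow_add' hN (by linarith), rpow_one, mul_div_assoc]
    _ ≤ _ := rpow_add_one_div_le_sum_Icc_rpow (by linarith) N

theorem sum_exp_neg_div_le_card_mul_exp {ι : Type*} (s : Finset ι) {a : ι → ℝ} {t M : ℝ}
    (ht : 0 ≤ t) (ha : ∀ i ∈ s, 0 < a i ∧ a i ≤ M) :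
    ∑ i ∈ s, exp (-t / a i) ≤ s.card * exp (-t / M) := by
  rw [← nsmul_eq_mul]
  refine Finset.sum_le_card_nsmul s _ _ fun i hi => exp_le_exp.2 ?_
  rw [neg_div, neg_div, neg_le_neg_iff]
  exact div_le_div_of_nonneg_left ht (ha i hi).1 (ha i hi).2

theorem tendsto_mul_exp_neg_mul_sqrt_atTop {c : ℝ} (hc : 0 < c) :
    Tendsto (fun x : ℝ => x * exp (-(c * √x))) atTop (nhds 0) := by
  refine ((tendsto_rpow_mul_exp_neg_mul_atTop_nhds_zero 2 c hc).comp tendsto_sqrt_atTop).congr' ?_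
  filter_upwards [eventually_ge_atTop 0] with x hx
  simp [sq_sqrt hx]

theorem sum_exp_tendsto_zero_of_polynomial_multiplicities
    (p : ℝ) (hp : 0 ≤ p) (ε : ℝ) (hε : 0 < ε) :
    Tendsto (fun N : ℕ => ∑ k ∈ Finset.Icc 1 N,
        Real.exp (-ε * Real.sqrt (∑ j ∈ Finset.Icc 1 N, ((j:ℝ)^p)^2) / (k:ℝ)^p))
      atTop (nhds 0) := by
  set c := ε / √(2 * p + 1)
  have hc : 0 < c := div_pos hε (sqrt_pos.2 (by linarith))
  refine squeeze_zero' (Eventually.of_forall fun N => Finset.sum_nonneg fun k _ => (exp_pos _).le)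
    ?_ ((tendsto_mul_exp_neg_mul_sqrt_atTop hc).comp tendsto_natCast_atTop_atTop)
  filter_upwards [eventually_ge_atTop 1] with N hN
  set s := √(∑ j ∈ Finset.Icc 1 N, ((j:ℝ)^p)^2)
  have hNp : 0 < (N : ℝ) ^ p := rpow_pos_of_pos (by exact_mod_cast hN) p
  have hkN : ∀ k ∈ Finset.Icc 1 N, 0 < (k : ℝ) ^ p ∧ (k : ℝ) ^ p ≤ (N : ℝ) ^ p := fun k hk => by
    obtain ⟨h1k, hkN⟩ := Finset.mem_Icc.1 hk
    exact ⟨rpow_pos_of_pos (by exact_mod_cast h1k) p,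
      rpow_le_rpow k.cast_nonneg (by exact_mod_cast hkN) hp⟩
  have hdecay : c * √N ≤ ε * s / (N : ℝ) ^ p := by
    rw [le_div_iff₀ hNp]
    calc c * √N * (N : ℝ) ^ p = ε * ((N : ℝ) ^ p * √(N / (2 * p + 1))) := by
          rw [sqrt_div N.cast_nonneg]; ring
      _ ≤ ε * s := by gcongr; exact rpow_mul_sqrt_div_le_sqrt_sum_sq_rpow hp N
  calc ∑ k ∈ Finset.Icc 1 N, exp (-ε * s / (k : ℝ) ^ p)
      ≤ N * exp (-(ε * s) / (N : ℝ) ^ p) := by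
        simpa [neg_mul] using sum_exp_neg_div_le_card_mul_exp _ (by positivity) hkN
    _ ≤ N * exp (-(c * √N)) := by
        gcongr
        rw [neg_div, neg_le_neg_iff]
        exact hdecay
end

section
/- Let (n_k) be positive integers with s_N² = Σ_{k=1}^N n_k², suppose Σ_{k=1}^N e^{-ε s_N/n_k} → 0 for every ε > 0, and let Y_k be i.i.d. copies of Y = log(2(1 - cos(2πU))) with U uniform on [0,1]. Then the triangular array X_{N,k} = n_k Y_k satisfies the Lindeberg condition: for every ε > 0, (1/s_N²) Σ_{k=1}^N n_k² E[Y_k²; |Y_k| ≥ ε s_N/n_k] → 0 as N → ∞. -/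
open Real MeasureTheory Filter Set

/-!
Writing `x = 2(1 - cos 2πu)`, the chord bound `x ≥ 16 min(u, 1 - u)²` makes `exp(|log x| / 4)`
integrable on `[0, 1]`, so `Y` has an exponential moment. Since `y² ≤ 256 exp(|y| / 8)`, this gives
the tail bound `E[Y²; |Y| ≥ t] ≤ C e^{-t/8}`, and as `n_k² ≤ s_N²` the Lindeberg sum is at most
`C Σ_k exp(-(ε/8) s_N / n_k)`, which tends to `0` by hypothesis.
-/

theorem sq_le_exp_mul_abs {c : ℝ} (hc : 0 < c) (x : ℝ) :
    x ^ 2 ≤ 16 / c ^ 2 * exp (c / 2 * |x|) := by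
  have hlin : c / 4 * |x| ≤ exp (c / 4 * |x|) := by
    linarith [add_one_le_exp (c / 4 * |x|)]
  calc x ^ 2 = 16 / c ^ 2 * (c / 4 * |x|) ^ 2 := by field_simp; rw [sq_abs]; ring
    _ ≤ 16 / c ^ 2 * exp (c / 4 * |x|) ^ 2 := by gcongr
    _ = 16 / c ^ 2 * exp (c / 2 * |x|) := by
        rw [← exp_nat_mul]; congr 2; push_cast; ring

theorem setIntegral_sq_le_of_integrable_exp_mul_abs {ν : Measure ℝ} {c : ℝ} (hc : 0 < c)
    (hν : Integrable (fun x => exp (c * |x|)) ν) (t : ℝ) :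
    ∫ x in {x | t ≤ |x|}, x ^ 2 ∂ν ≤ 16 / c ^ 2 * (∫ x, exp (c * |x|) ∂ν) * exp (-(c / 2) * t) := by
  have hs : MeasurableSet {x : ℝ | t ≤ |x|} := measurableSet_le measurable_const measurable_abs
  have hbound : ∀ x ∈ {x : ℝ | t ≤ |x|},
      x ^ 2 ≤ 16 / c ^ 2 * exp (-(c / 2) * t) * exp (c * |x|) := by
    intro x hx
    calc x ^ 2 ≤ 16 / c ^ 2 * exp (c / 2 * |x|) := sq_le_exp_mul_abs hc x
      _ ≤ 16 / c ^ 2 * exp (-(c / 2) * t + c * |x|) := by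
        gcongr; nlinarith [hx.out]
      _ = 16 / c ^ 2 * exp (-(c / 2) * t) * exp (c * |x|) := by rw [exp_add]; ring
  calc ∫ x in {x | t ≤ |x|}, x ^ 2 ∂ν
      ≤ ∫ x in {x | t ≤ |x|}, 16 / c ^ 2 * exp (-(c / 2) * t) * exp (c * |x|) ∂ν :=
        integral_mono_of_nonneg (ae_of_all _ fun x => sq_nonneg x)
          (hν.const_mul _).integrableOn ((ae_restrict_iff' hs).2 (ae_of_all _ hbound))
    _ ≤ ∫ x, 16 / c ^ 2 * exp (-(c / 2) * t) * exp (c * |x|) ∂ν :=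
        setIntegral_le_integral (hν.const_mul _) (ae_of_all _ fun x => by positivity)
    _ = 16 / c ^ 2 * (∫ x, exp (c * |x|) ∂ν) * exp (-(c / 2) * t) := by
        rw [integral_const_mul]; ring

theorem tendsto_lindeberg_sum_of_tail_le {Ω : Type*} [MeasurableSpace Ω] (μ : Measure Ω)
    (n : ℕ → ℕ) (s : ℕ → ℝ) (hs : ∀ N, s N = √(∑ k ∈ Finset.Icc 1 N, (n k : ℝ) ^ 2))
    (Y : ℕ → Ω → ℝ) {C c ε : ℝ}
    (htail : ∀ k t, ∫ ω in {ω | t ≤ |Y k ω|}, Y k ω ^ 2 ∂μ ≤ C * exp (-c * t))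
    (hcond : Tendsto (fun N : ℕ =>
        ∑ k ∈ Finset.Icc 1 N, exp (-(c * ε) * s N / (n k : ℝ))) atTop (nhds 0)) :
    Tendsto (fun N : ℕ =>
        (1 / (s N) ^ 2) * ∑ k ∈ Finset.Icc 1 N, (n k : ℝ) ^ 2 *
          ∫ ω in {ω | ε * s N / (n k : ℝ) ≤ |Y k ω|}, (Y k ω) ^ 2 ∂μ)
      atTop (nhds 0) := by
  have hlim := hcond.const_mul C
  rw [mul_zero] at hlim
  refine squeeze_zero (fun N => ?_) (fun N => ?_) hlim
  · exact mul_nonneg (by positivity) (Finset.sum_nonneg fun k _ =>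
      mul_nonneg (by positivity) (integral_nonneg fun ω => sq_nonneg _))
  rw [Finset.mul_sum, Finset.mul_sum]
  refine Finset.sum_le_sum fun k hk => ?_
  have hweight : (n k : ℝ) ^ 2 / s N ^ 2 ≤ 1 := by
    refine div_le_one_of_le₀ ?_ (sq_nonneg _)
    rw [hs N, sq_sqrt (by positivity)]
    exact Finset.single_le_sum (f := fun k => (n k : ℝ) ^ 2) (fun i _ => by positivity) hk
  have hI : 0 ≤ ∫ ω in {ω | ε * s N / (n k : ℝ) ≤ |Y k ω|}, Y k ω ^ 2 ∂μ :=
    integral_nonneg fun ω => sq_nonneg _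
  calc 1 / s N ^ 2 * ((n k : ℝ) ^ 2 * ∫ ω in {ω | ε * s N / (n k : ℝ) ≤ |Y k ω|}, Y k ω ^ 2 ∂μ)
      = (n k : ℝ) ^ 2 / s N ^ 2 * ∫ ω in {ω | ε * s N / (n k : ℝ) ≤ |Y k ω|}, Y k ω ^ 2 ∂μ := by
        ring
    _ ≤ ∫ ω in {ω | ε * s N / (n k : ℝ) ≤ |Y k ω|}, Y k ω ^ 2 ∂μ :=
        mul_le_of_le_one_left hI hweight
    _ ≤ C * exp (-(c * ε) * s N / (n k : ℝ)) := by
        convert htail k (ε * s N / n k) using 3; ring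

/-- `2 (1 - cos 2πu) = |1 - e^{2πiu}|²` is the squared length of a chord of the unit circle. -/
noncomputable def logSqChord (u : ℝ) : ℝ :=
  Real.log (2 * (1 - Real.cos (2 * π * u)))

@[fun_prop]
theorem measurable_logSqChord : Measurable logSqChord := by
  unfold logSqChord; fun_prop

theorem sixteen_mul_min_sq_le_two_mul_one_sub_cos {u : ℝ} (hu : u ∈ Icc (0 : ℝ) 1) :
    16 * min u (1 - u) ^ 2 ≤ 2 * (1 - cos (2 * π * u)) := by
  have hcos : cos (2 * π * u) = cos (2 * π * min u (1 - u)) := by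
    rcases min_choice u (1 - u) with h | h <;> rw [h]
    rw [show 2 * π * (1 - u) = 2 * π - 2 * π * u by ring, cos_two_pi_sub]
  set m := min u (1 - u)
  have hm0 : 0 ≤ m := le_min hu.1 (by linarith [hu.2])
  have hm1 : m ≤ 1 / 2 := by
    have := min_le_left u (1 - u); have := min_le_right u (1 - u); linarith
  have hquad := cos_le_one_sub_mul_cos_sq (x := 2 * π * m)
    (abs_le.2 ⟨by nlinarith [pi_pos], by nlinarith [pi_pos]⟩)
  have h8 : 2 / π ^ 2 * (2 * π * m) ^ 2 = 8 * m ^ 2 := by field_simp; ring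
  rw [hcos]; linarith

theorem exp_mul_abs_log_le {a m x : ℝ} (ha₀ : 0 ≤ a) (ha₁ : a ≤ 1) (hm : 0 < m)
    (hmx : m ^ 2 ≤ x) : exp (a * |log x|) ≤ x + m ^ (-(2 * a)) := by
  have hx : 0 < x := lt_of_lt_of_le (by positivity) hmx
  rcases le_or_gt 0 (log x) with hlog | hlog
  · calc exp (a * |log x|) ≤ exp (log x) := exp_le_exp.2 (by rw [abs_of_nonneg hlog]; nlinarith)
      _ = x := exp_log hx
      _ ≤ x + m ^ (-(2 * a)) := le_add_of_nonneg_right (rpow_nonneg hm.le _)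
  · have hlogm : 2 * log m ≤ log x := by
      have := log_le_log (by positivity) hmx
      rwa [log_pow, Nat.cast_ofNat] at this
    calc exp (a * |log x|) ≤ exp (log m * (-(2 * a))) :=
          exp_le_exp.2 (by rw [abs_of_neg hlog]; nlinarith)
      _ = m ^ (-(2 * a)) := (rpow_def_of_pos hm _).symm
      _ ≤ x + m ^ (-(2 * a)) := le_add_of_nonneg_left hx.le

theorem exp_abs_logSqChord_le {u : ℝ} (hu : u ∈ Ioo (0 : ℝ) 1) :
    exp (1 / 4 * |logSqChord u|) ≤ 4 + (u ^ (-(1 / 2 : ℝ)) + (1 - u) ^ (-(1 / 2 : ℝ))) := by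
  have hm : 0 < min u (1 - u) := lt_min hu.1 (by linarith [hu.2])
  have hchord := sixteen_mul_min_sq_le_two_mul_one_sub_cos (Ioo_subset_Icc_self hu)
  have hx4 : 2 * (1 - cos (2 * π * u)) ≤ 4 := by linarith [neg_one_le_cos (2 * π * u)]
  have hmin : min u (1 - u) ^ (-(1 / 2 : ℝ)) ≤ u ^ (-(1 / 2 : ℝ)) + (1 - u) ^ (-(1 / 2 : ℝ)) := by
    have h₁ := rpow_nonneg hu.1.le (-(1 / 2 : ℝ))
    have h₂ := rpow_nonneg (sub_nonneg.2 hu.2.le) (-(1 / 2 : ℝ))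
    rcases min_choice u (1 - u) with h | h <;> rw [h] <;> linarith
  have hexp := exp_mul_abs_log_le (a := 1 / 4) (x := 2 * (1 - cos (2 * π * u)))
    (by norm_num) (by norm_num) hm (by nlinarith [sq_nonneg (min u (1 - u))])
  rw [show -(2 * (1 / 4 : ℝ)) = -(1 / 2) by norm_num] at hexp
  unfold logSqChord
  linarith

theorem integrableOn_exp_abs_logSqChord :
    IntegrableOn (fun u => exp (1 / 4 * |logSqChord u|)) (Icc 0 1) := by
  have h₁ : IntervalIntegrable (fun u : ℝ => u ^ (-(1 / 2 : ℝ))) volume 0 1 :=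
    intervalIntegral.intervalIntegrable_rpow' (by norm_num)
  have h₂ : IntervalIntegrable (fun u : ℝ => (1 - u) ^ (-(1 / 2 : ℝ))) volume 0 1 := by
    simpa using (h₁.comp_sub_left 1).symm
  have hdom : IntegrableOn (fun u : ℝ => 4 + (u ^ (-(1 / 2 : ℝ)) + (1 - u) ^ (-(1 / 2 : ℝ))))
      (Ioo 0 1) :=
    (intervalIntegrable_const.add (h₁.add h₂)).1.mono_set Ioo_subset_Ioc_self
  rw [integrableOn_Icc_iff_integrableOn_Ioo]
  refine hdom.mono' (by fun_prop) ((ae_restrict_iff' measurableSet_Ioo).2 (ae_of_all _ ?_))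
  intro u hu
  rw [norm_of_nonneg (exp_pos _).le]
  exact exp_abs_logSqChord_le hu

theorem lindeberg_condition_of_exponent_condition_general
    {Ω : Type*} [MeasurableSpace Ω] (μ : Measure Ω)
    (n : ℕ → ℕ)
    (s : ℕ → ℝ) (hs : ∀ N, s N = Real.sqrt (∑ k ∈ Finset.Icc 1 N, (n k : ℝ)^2))
    (hcond : ∀ ε : ℝ, 0 < ε → Tendsto (fun N : ℕ =>
        ∑ k ∈ Finset.Icc 1 N, Real.exp (-ε * s N / (n k : ℝ))) atTop (nhds 0))
    (Y : ℕ → Ω → ℝ) (hmeas : ∀ k, Measurable (Y k))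
    (hdist : ∀ k, Measure.map (Y k) μ =
        Measure.map (fun u : ℝ => Real.log (2*(1 - Real.cos (2*π*u))))
          (volume.restrict (Set.Icc (0:ℝ) 1))) :
    ∀ ε : ℝ, 0 < ε → Tendsto (fun N : ℕ =>
        (1/(s N)^2) * ∑ k ∈ Finset.Icc 1 N, (n k : ℝ)^2 *
          ∫ ω in {ω | ε * s N / (n k : ℝ) ≤ |Y k ω|}, (Y k ω)^2 ∂μ)
      atTop (nhds 0) := by
  intro ε hε
  set ν := (volume.restrict (Icc (0 : ℝ) 1)).map logSqChord
  have hν : Integrable (fun x => exp (1 / 4 * |x|)) ν :=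
    (integrable_map_measure (by fun_prop) measurable_logSqChord.aemeasurable).2
      integrableOn_exp_abs_logSqChord
  refine tendsto_lindeberg_sum_of_tail_le μ n s hs Y (C := 256 * ∫ x, exp (1 / 4 * |x|) ∂ν)
    (c := 1 / 8) (fun k t => ?_) (hcond _ (by positivity))
  have hA : MeasurableSet {x : ℝ | t ≤ |x|} := measurableSet_le measurable_const measurable_abs
  calc ∫ ω in {ω | t ≤ |Y k ω|}, Y k ω ^ 2 ∂μ = ∫ x in {x | t ≤ |x|}, x ^ 2 ∂μ.map (Y k) :=
        (setIntegral_map (f := fun x => x ^ 2) hA (by fun_prop) (hmeas k).aemeasurable).symm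
    _ ≤ 256 * (∫ x, exp (1 / 4 * |x|) ∂ν) * exp (-(1 / 8) * t) := by
        rw [show μ.map (Y k) = ν from hdist k]
        convert setIntegral_sq_le_of_integrable_exp_mul_abs (by norm_num) hν t using 3 <;> norm_num

theorem lindeberg_condition_of_exponent_condition
    {Ω : Type*} [MeasurableSpace Ω] (μ : Measure Ω) [IsProbabilityMeasure μ]
    (n : ℕ → ℕ) (hn : ∀ k, 0 < n k)
    (s : ℕ → ℝ) (hs : ∀ N, s N = Real.sqrt (∑ k ∈ Finset.Icc 1 N, (n k : ℝ)^2))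
    (hcond : ∀ ε : ℝ, 0 < ε → Tendsto (fun N : ℕ =>
        ∑ k ∈ Finset.Icc 1 N, Real.exp (-ε * s N / (n k : ℝ))) atTop (nhds 0))
    (Y : ℕ → Ω → ℝ) (hmeas : ∀ k, Measurable (Y k))
    (hindep : ProbabilityTheory.iIndepFun Y μ)
    (hdist : ∀ k, Measure.map (Y k) μ =
        Measure.map (fun u : ℝ => Real.log (2*(1 - Real.cos (2*π*u))))
          (volume.restrict (Set.Icc (0:ℝ) 1))) :
    ∀ ε : ℝ, 0 < ε → Tendsto (fun N : ℕ =>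
        (1/(s N)^2) * ∑ k ∈ Finset.Icc 1 N, (n k : ℝ)^2 *
          ∫ ω in {ω | ε * s N / (n k : ℝ) ≤ |Y k ω|}, (Y k ω)^2 ∂μ)
      atTop (nhds 0) :=
  lindeberg_condition_of_exponent_condition_general μ n s hs hcond Y hmeas hdist
end

section
/- Let W : [0, 2π] → ℝ be continuous with W(0) = W(2π) = 0, and for φ ∈ [0, 2π) define the shift W_φ(θ) = W(φ + θ) - W(φ) for θ ∈ [0, 2π - φ] and W_φ(θ) = W(φ + θ - 2π) - W(φ) for θ ∈ [2π - φ, 2π]. If moreover the integrals I_φ = ∫₀^{2π} W_φ(θ) sin θ/(1 - cos θ) dθ all exist absolutely and W satisfies the modulus bound |W(t+δ) - W(t)| ≤ C√(δ log(1/δ)) + Cδ (interpreted cyclically), then φ ↦ I_φ is continuous on [0, 2π). -/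
/-!
The modulus bound gives |W(t + δ) - W(t)| ≤ 3|C| δ^(1/4) for δ ≤ min δ₀ 1; this makes the
periodic extension continuous, and chaining extends the bound (with a larger constant) to all
δ ≤ π. Since |sin θ / (1 - cos θ)| = |cot (θ/2)| ≤ π/θ on (0, π] and the kernel is odd under
θ ↦ 2π - θ, the integrand is dominated, uniformly in φ, by a multiple of
θ^(-3/4) + (2π - θ)^(-3/4), which is integrable; dominated convergence concludes.
-/

open Real MeasureTheory Filter Topology Set Function

theorem sqrt_mul_log_one_div_le {δ : ℝ} (hδ : 0 < δ) :
    √(δ * log (1 / δ)) ≤ 2 * δ ^ (1 / 4 : ℝ) := by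
  have hlog : δ * log (1 / δ) ≤ 2 * δ ^ (1 / 2 : ℝ) := by
    have h := log_le_rpow_div (one_div_nonneg.2 hδ.le) (one_half_pos (α := ℝ))
    rw [div_rpow zero_le_one hδ.le, one_rpow] at h
    calc δ * log (1 / δ) ≤ δ * (1 / δ ^ (1 / 2 : ℝ) / (1 / 2)) := by gcongr
      _ = 2 * (δ ^ (1 : ℝ) / δ ^ (1 / 2 : ℝ)) := by rw [rpow_one]; ring
      _ = 2 * δ ^ (1 / 2 : ℝ) := by rw [← rpow_sub hδ]; norm_num
  rw [sqrt_le_iff]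
  refine ⟨by positivity, hlog.trans ?_⟩
  have hsq : (δ ^ (1 / 4 : ℝ)) ^ 2 = δ ^ (1 / 2 : ℝ) := by
    rw [← rpow_natCast, ← rpow_mul hδ.le]; norm_num
  nlinarith [rpow_pos_of_pos hδ (1 / 2 : ℝ)]

theorem mul_sqrt_mul_log_one_div_add_mul_le (C : ℝ) {δ : ℝ} (hδ : 0 < δ) (hδ1 : δ ≤ 1) :
    C * √(δ * log (1 / δ)) + C * δ ≤ 3 * |C| * δ ^ (1 / 4 : ℝ) := by
  have hsqrt : C * √(δ * log (1 / δ)) ≤ |C| * (2 * δ ^ (1 / 4 : ℝ)) :=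
    (mul_le_mul_of_nonneg_right (le_abs_self C) (sqrt_nonneg _)).trans
      (mul_le_mul_of_nonneg_left (sqrt_mul_log_one_div_le hδ) (abs_nonneg C))
  have hlin : C * δ ≤ |C| * δ ^ (1 / 4 : ℝ) := by
    refine (mul_le_mul_of_nonneg_right (le_abs_self C) hδ.le).trans
      (mul_le_mul_of_nonneg_left ?_ (abs_nonneg C))
    simpa using rpow_le_rpow_of_exponent_ge hδ hδ1 (by norm_num : (1 / 4 : ℝ) ≤ 1)
  linarith

section Increments

variable {f : ℝ → ℝ} {A α δ₁ : ℝ}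

theorem abs_sub_le_of_increment_le_rpow (hA : 0 ≤ A) (hα : 0 ≤ α)
    (hf : ∀ t δ, 0 < δ → δ ≤ δ₁ → |f (t + δ) - f t| ≤ A * δ ^ α)
    {n : ℕ} {t δ : ℝ} (hδ : 0 < δ) (hδn : δ ≤ n * δ₁) :
    |f (t + δ) - f t| ≤ n * A * δ ^ α := by
  have hn : (1 : ℝ) ≤ n := by
    refine Nat.one_le_cast.2 (Nat.pos_of_ne_zero ?_)
    rintro rfl
    simp only [Nat.cast_zero, zero_mul] at hδn
    linarith
  set h := δ / n
  have hh : 0 < h := by positivity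
  have hhδ₁ : h ≤ δ₁ := by rw [div_le_iff₀ (by linarith)]; linarith
  have hhδ : h ≤ δ := div_le_self hδ.le hn
  have htel : f (t + δ) - f t = ∑ k ∈ Finset.range n, (f (t + k * h + h) - f (t + k * h)) := by
    have := Finset.sum_range_sub (fun k : ℕ => f (t + k * h)) n
    simp only [Nat.cast_succ, Nat.cast_zero, zero_mul, add_zero, add_mul, one_mul,
      ← add_assoc] at this
    rw [this, mul_div_cancel₀ δ (by positivity : (n : ℝ) ≠ 0)]
  calc |f (t + δ) - f t| ≤ ∑ k ∈ Finset.range n, |f (t + k * h + h) - f (t + k * h)| := by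
        rw [htel]; exact Finset.abs_sum_le_sum_abs _ _
    _ ≤ ∑ _k ∈ Finset.range n, A * h ^ α :=
        Finset.sum_le_sum fun k _ => hf _ h hh hhδ₁
    _ ≤ ∑ _k ∈ Finset.range n, A * δ ^ α := by gcongr
    _ = n * A * δ ^ α := by rw [Finset.sum_const, Finset.card_range, nsmul_eq_mul, mul_assoc]

theorem continuous_of_increment_le_rpow (hα : 0 < α) (hδ₁ : 0 < δ₁)
    (hf : ∀ t δ, 0 < δ → δ ≤ δ₁ → |f (t + δ) - f t| ≤ A * δ ^ α) : Continuous f := by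
  rw [continuous_iff_continuousAt]
  intro x
  have hnear : ∀ y, |y - x| ≤ δ₁ → |f y - f x| ≤ A * |y - x| ^ α := by
    intro y hy
    rcases lt_trichotomy x y with hxy | rfl | hxy
    · rw [abs_of_pos (sub_pos.2 hxy)] at hy ⊢
      simpa using hf x (y - x) (sub_pos.2 hxy) hy
    · simp [zero_rpow hα.ne']
    · rw [abs_sub_comm, abs_of_pos (sub_pos.2 hxy)] at hy
      rw [abs_sub_comm, abs_sub_comm y, abs_of_pos (sub_pos.2 hxy)]
      simpa using hf y (x - y) (sub_pos.2 hxy) hy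
  have hlim : Tendsto (fun y => A * |y - x| ^ α) (𝓝 x) (𝓝 0) := by
    have : Continuous fun y => A * |y - x| ^ α :=
      continuous_const.mul ((continuous_sub_right x).abs.rpow_const fun _ => Or.inr hα.le)
    simpa [zero_rpow hα.ne'] using this.tendsto x
  rw [ContinuousAt, tendsto_iff_norm_sub_tendsto_zero]
  refine squeeze_zero' (Eventually.of_forall fun _ => norm_nonneg _) ?_ hlim
  filter_upwards [Metric.closedBall_mem_nhds x hδ₁] with y hy
  exact hnear y hy

end Increments

theorem abs_sin_div_one_sub_cos_le {θ : ℝ} (h0 : 0 < θ) (hπ : θ ≤ π) :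
    |sin θ / (1 - cos θ)| ≤ π / θ := by
  have hs : θ / π ≤ sin (θ / 2) := by
    have := mul_le_sin (x := θ / 2) (by positivity) (by linarith)
    convert this using 1
    field_simp
  have hs0 : 0 < sin (θ / 2) := lt_of_lt_of_le (by positivity) hs
  have hsin : sin θ = 2 * sin (θ / 2) * cos (θ / 2) := by
    rw [← sin_two_mul]; ring_nf
  have hcos : 1 - cos θ = 2 * sin (θ / 2) ^ 2 := by
    rw [show θ = 2 * (θ / 2) by ring, cos_two_mul, cos_sq']; ring_nf
  calc |sin θ / (1 - cos θ)| = |cos (θ / 2)| / sin (θ / 2) := by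
        rw [hsin, hcos, abs_div, abs_of_pos (by positivity : (0:ℝ) < 2 * sin (θ / 2) ^ 2),
          abs_mul, abs_of_pos (by positivity : (0:ℝ) < 2 * sin (θ / 2))]
        field_simp
    _ ≤ 1 / sin (θ / 2) := by gcongr; exact abs_cos_le_one _
    _ ≤ π / θ := by
        rw [div_le_div_iff₀ hs0 h0]
        rw [div_le_iff₀ pi_pos] at hs
        linarith

theorem abs_increment_mul_sin_div_one_sub_cos_le {f : ℝ → ℝ} {B α : ℝ} (hf : Periodic f (2 * π))
    (hB : 0 ≤ B) (hinc : ∀ t δ, 0 < δ → δ ≤ π → |f (t + δ) - f t| ≤ B * δ ^ α)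
    (φ : ℝ) {θ : ℝ} (hθ : θ ∈ Ioo 0 (2 * π)) :
    |(f (φ + θ) - f φ) * (sin θ / (1 - cos θ))| ≤
      π * B * (θ ^ (α - 1) + (2 * π - θ) ^ (α - 1)) := by
  have hhalf : ∀ t δ, 0 < δ → δ ≤ π →
      |f (t + δ) - f t| * |sin δ / (1 - cos δ)| ≤ π * B * δ ^ (α - 1) := by
    intro t δ hδ hδπ
    calc |f (t + δ) - f t| * |sin δ / (1 - cos δ)| ≤ B * δ ^ α * (π / δ) :=
          mul_le_mul (hinc t δ hδ hδπ) (abs_sin_div_one_sub_cos_le hδ hδπ) (abs_nonneg _)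
            (by positivity)
      _ = π * B * δ ^ (α - 1) := by rw [rpow_sub_one hδ.ne']; ring
  obtain ⟨hθ0, hθ2π⟩ := hθ
  have hθ' : 0 ≤ π * B * θ ^ (α - 1) := by positivity
  have hη' : 0 ≤ π * B * (2 * π - θ) ^ (α - 1) := by
    have : 0 < 2 * π - θ := by linarith
    positivity
  rw [abs_mul]
  rcases le_total θ π with hθπ | hπθ
  · nlinarith [hhalf φ θ hθ0 hθπ]
  · have hK : |sin θ / (1 - cos θ)| = |sin (2 * π - θ) / (1 - cos (2 * π - θ))| := by
      rw [sin_two_pi_sub, cos_two_pi_sub, neg_div, abs_neg]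
    have hD : |f (φ + θ) - f φ| = |f (φ + θ + (2 * π - θ)) - f (φ + θ)| := by
      rw [show φ + θ + (2 * π - θ) = φ + 2 * π by ring, hf φ, abs_sub_comm]
    rw [hK, hD]
    nlinarith [hhalf (φ + θ) (2 * π - θ) (by linarith) (by linarith)]

theorem intervalIntegrable_rpow_add_rpow_sub {r : ℝ} (hr : -1 < r) (T : ℝ) :
    IntervalIntegrable (fun x => x ^ r + (T - x) ^ r) volume 0 T := by
  refine (intervalIntegral.intervalIntegrable_rpow' hr).add ?_
  simpa using (intervalIntegral.intervalIntegrable_rpow' hr (a := T) (b := 0)).comp_sub_left T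

theorem shifted_eq_periodic_sub {W Wper : ℝ → ℝ} (hper : Periodic Wper (2 * π))
    (hagree : ∀ t ∈ Icc (0 : ℝ) (2 * π), Wper t = W t)
    {φ θ : ℝ} (hφ : φ ∈ Ico 0 (2 * π)) (hθ : θ ∈ Icc 0 (2 * π)) :
    (if θ ≤ 2 * π - φ then W (φ + θ) - W φ else W (φ + θ - 2 * π) - W φ) =
      Wper (φ + θ) - Wper φ := by
  obtain ⟨hφ0, hφ2π⟩ := hφ
  obtain ⟨hθ0, hθ2π⟩ := hθ
  rw [hagree φ ⟨hφ0, hφ2π.le⟩]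
  split_ifs with h
  · rw [hagree (φ + θ) ⟨by linarith, by linarith⟩]
  · rw [← hper.sub_eq, hagree _ ⟨by linarith, by linarith⟩]

theorem shifted_bridge_integral_continuous_general
    (W : ℝ → ℝ)
    (Wper : ℝ → ℝ) (hper : Function.Periodic Wper (2*π))
    (hagree : ∀ t ∈ Set.Icc (0:ℝ) (2*π), Wper t = W t)
    (C δ₀ : ℝ) (hδ₀ : 0 < δ₀)
    (hmod : ∀ t δ : ℝ, 0 < δ → δ ≤ δ₀ →
      |Wper (t + δ) - Wper t| ≤ C * Real.sqrt (δ * Real.log (1/δ)) + C * δ)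
    (I : ℝ → ℝ)
    (hI : ∀ φ, I φ = ∫ θ in (0:ℝ)..(2*π),
      (if θ ≤ 2*π - φ then W (φ + θ) - W φ else W (φ + θ - 2*π) - W φ) *
        (Real.sin θ / (1 - Real.cos θ))) :
    ContinuousOn I (Set.Ico 0 (2*π)) := by
  set δ₁ := min δ₀ 1
  have hδ₁ : 0 < δ₁ := lt_min hδ₀ one_pos
  have hloc : ∀ t δ, 0 < δ → δ ≤ δ₁ → |Wper (t + δ) - Wper t| ≤ 3 * |C| * δ ^ (1 / 4 : ℝ) :=
    fun t δ hδ hδδ₁ => (hmod t δ hδ (hδδ₁.trans (min_le_left _ _))).trans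
      (mul_sqrt_mul_log_one_div_add_mul_le C hδ (hδδ₁.trans (min_le_right _ _)))
  have hcont : Continuous Wper := continuous_of_increment_le_rpow (by norm_num) hδ₁ hloc
  set B := ⌈π / δ₁⌉₊ * (3 * |C|)
  have hinc : ∀ t δ, 0 < δ → δ ≤ π → |Wper (t + δ) - Wper t| ≤ B * δ ^ (1 / 4 : ℝ) :=
    fun t δ hδ hδπ => abs_sub_le_of_increment_le_rpow (by positivity) (by norm_num) hloc hδ
      (hδπ.trans ((div_le_iff₀ hδ₁).1 (Nat.le_ceil _)))
  have hIeq : EqOn I (fun φ => ∫ θ in (0:ℝ)..(2*π), (Wper (φ + θ) - Wper φ) *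
      (sin θ / (1 - cos θ))) (Ico 0 (2 * π)) := fun φ hφ =>
    (hI φ).trans <| intervalIntegral.integral_congr fun θ hθ => by
      rw [uIcc_of_le two_pi_pos.le] at hθ
      rw [shifted_eq_periodic_sub hper hagree hφ hθ]
  refine ((intervalIntegral.continuous_of_dominated_interval
    (bound := fun θ => π * B * (θ ^ ((1 / 4 : ℝ) - 1) + (2 * π - θ) ^ ((1 / 4 : ℝ) - 1)))
    ?_ ?_ ?_ ?_).continuousOn).congr hIeq
  · have hmeas := hcont.measurable
    exact fun φ => by fun_prop
  · intro φ
    filter_upwards [Measure.ae_ne volume (2 * π)] with θ hθ2π hmem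
    rw [uIoc_of_le two_pi_pos.le] at hmem
    exact abs_increment_mul_sin_div_one_sub_cos_le hper (by positivity) hinc φ
      ⟨hmem.1, lt_of_le_of_ne hmem.2 hθ2π⟩
  · exact (intervalIntegrable_rpow_add_rpow_sub (by norm_num) _).const_mul _
  · exact Eventually.of_forall fun θ _ => by fun_prop

theorem shifted_bridge_integral_continuous
    (W : ℝ → ℝ) (hW : ContinuousOn W (Set.Icc 0 (2*π)))
    (h0 : W 0 = 0) (h2π : W (2*π) = 0)
    (Wper : ℝ → ℝ) (hper : Function.Periodic Wper (2*π))
    (hagree : ∀ t ∈ Set.Icc (0:ℝ) (2*π), Wper t = W t)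
    (C δ₀ : ℝ) (hδ₀ : 0 < δ₀)
    (hmod : ∀ t δ : ℝ, 0 < δ → δ ≤ δ₀ →
      |Wper (t + δ) - Wper t| ≤ C * Real.sqrt (δ * Real.log (1/δ)) + C * δ)
    (I : ℝ → ℝ)
    (hI : ∀ φ, I φ = ∫ θ in (0:ℝ)..(2*π),
      (if θ ≤ 2*π - φ then W (φ + θ) - W φ else W (φ + θ - 2*π) - W φ) *
        (Real.sin θ / (1 - Real.cos θ)))
    (hint : ∀ φ ∈ Set.Ico (0:ℝ) (2*π), IntervalIntegrable
      (fun θ : ℝ =>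
        (if θ ≤ 2*π - φ then W (φ + θ) - W φ else W (φ + θ - 2*π) - W φ) *
          (Real.sin θ / (1 - Real.cos θ)))
      MeasureTheory.volume 0 (2*π)) :
    ContinuousOn I (Set.Ico 0 (2*π)) :=
  shifted_bridge_integral_continuous_general W Wper hper hagree C δ₀ hδ₀ hmod I hI
end
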